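/- (Theorem 1 of the paper) If the conditional distribution of π given y is lognormal with log-mean h₁(y) + h₂ and variance σ², and y has density p(y), then the sample density under informative sampling satisfies p_s(y, π) = [normal(log π | h₁(y) + h₂, σ²) / (exp(h₂ + σ²/2) · M)] · p(y), where M = E_y[exp(h₁(y))]. -/
import Mathlib


open MeasureTheory ProbabilityTheory
open scoped NNReal ENNReal

lemma gaussianPDFReal_mul_exp (μ : ℝ) (v : ℝ≥0) (hv : v ≠ 0) (x : ℝ) :
    Real.exp x * gaussianPDFReal μ v x =
      Real.exp (μ + (v : ℝ) / 2) * gaussianPDFReal (μ + v) v x := by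
  have hv' : (0 : ℝ) < v := lt_of_le_of_ne v.coe_nonneg (by exact_mod_cast (Ne.symm hv))
  unfold gaussianPDFReal
  rw [mul_comm (Real.exp x), mul_assoc, ← Real.exp_add, mul_comm (Real.exp (μ + (v : ℝ) / 2)),
    mul_assoc, mul_assoc, ← Real.exp_add]
  congr 2
  field_simp
  ring

lemma integral_exp_gaussianReal (μ : ℝ) (v : ℝ≥0) (hv : v ≠ 0) :
    ∫ x, Real.exp x ∂(gaussianReal μ v) = Real.exp (μ + (v : ℝ) / 2) := by
  rw [gaussianReal_of_var_ne_zero μ hv]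
  have h : (gaussianPDF μ v) = fun x => ((gaussianPDFReal μ v x).toNNReal : ℝ≥0∞) := by
    ext x; simp [gaussianPDF, ENNReal.ofReal]
  rw [h, integral_withDensity_eq_integral_smul
    (by exact (measurable_gaussianPDFReal μ v).real_toNNReal) Real.exp]
  have : ∀ x : ℝ, (Real.toNNReal (gaussianPDFReal μ v x)) • Real.exp x
      = Real.exp (μ + (v : ℝ) / 2) * gaussianPDFReal (μ + v) v x := by
    intro x
    rw [NNReal.smul_def, smul_eq_mul, Real.coe_toNNReal _ (gaussianPDFReal_nonneg μ v x),
      mul_comm, gaussianPDFReal_mul_exp μ v hv x]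
  simp_rw [this]
  rw [integral_const_mul, integral_gaussianPDFReal_eq_one (μ + v) hv, mul_one]

/-- Theorem 1 of the paper: if `π | y` is lognormal with log-mean `h₁(y) + h₂` and
variance `v`, and `y` has density `p`, then the sample density
`p_s(y,π) = π g(π|y) p(y) / E_y[E(π|y)]` equals
`normal(log π | h₁(y)+h₂, v) / (exp(h₂ + v/2) ⋅ M) ⋅ p(y)`, with `M = E_y[exp(h₁(y))]`. -/
theorem sample_density_closed_form
    (p : ℝ → ℝ) (hp : Measurable p) (hp0 : ∀ y, 0 ≤ p y) (hp1 : ∫ y, p y = 1)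
    (h1 : ℝ → ℝ) (hm : Measurable h1) (h2 : ℝ) (v : ℝ≥0) (hv : v ≠ 0)
    (M : ℝ) (hM : M = ∫ y, Real.exp (h1 y) * p y) (hMpos : 0 < M)
    (hint : Integrable (fun y => Real.exp (h1 y) * p y))
    (y π : ℝ) (hπ : 0 < π) :
    (π * (gaussianPDFReal (h1 y + h2) v (Real.log π) / π) * p y) /
        (∫ y', (∫ x, Real.exp x ∂(gaussianReal (h1 y' + h2) v)) * p y') =
      gaussianPDFReal (h1 y + h2) v (Real.log π) /
        (Real.exp (h2 + (v : ℝ) / 2) * M) * p y := by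
  have hden : (∫ y', (∫ x, Real.exp x ∂(gaussianReal (h1 y' + h2) v)) * p y')
      = Real.exp (h2 + (v : ℝ) / 2) * M := by
    have : ∀ y' : ℝ, (∫ x, Real.exp x ∂(gaussianReal (h1 y' + h2) v)) * p y'
        = Real.exp (h2 + (v : ℝ) / 2) * (Real.exp (h1 y') * p y') := by
      intro y'
      rw [integral_exp_gaussianReal _ v hv,
        show h1 y' + h2 + (v : ℝ) / 2 = (h2 + (v : ℝ) / 2) + h1 y' by ring,
        Real.exp_add, mul_assoc]
    simp_rw [this]
    rw [integral_const_mul, hM]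
  rw [hden]
  field_simp
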